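/- Let $S\subset\mathbb{R}$ be compact, $g:S\to\mathbb{R}$ twice continuously differentiable on a neighborhood of $S$ with unique interior maximizer $\theta$, $g'(\theta)=0$, $g''$ continuous and $g''(\theta)\ne0$, and let $(g_n)$ be functions with $\alpha_n:=\sup_{y\in S}|g_n(y)-g(y)|\to0$. If $\hat\theta_n$ maximizes $g_n$ over $S$, then $(\hat\theta_n-\theta)^2=O(\alpha_n)$, i.e., there exist $C>0$ and $N$ such that $(\hat\theta_n-\theta)^2\le C\alpha_n$ for all $n\ge N$. -/

import Mathlib

/-!
Uniform closeness gives `g θ - g θ̂ₙ ≤ 2αₙ`, since `θ̂ₙ` maximizes `gₙ`. Hence `g θ̂ₙ → g θ`,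
and because `θ` is the unique maximizer of the continuous `g` on the compact `[a, b]`, `θ̂ₙ → θ`.
Near `θ`, the second-order Taylor expansion with `g'(θ) = 0` gives
`|g''(θ)|/4 · (y - θ)² ≤ |g y - g θ|`, which combined with the `2αₙ` bound is the rate.
-/

open Set Filter Topology

theorem taylorWithinEval_two_of_isOpen {g : ℝ → ℝ} {s : Set ℝ} (hs : IsOpen s) {x₀ : ℝ}
    (hx₀ : x₀ ∈ s) (x : ℝ) :
    taylorWithinEval g 2 s x₀ x =
      g x₀ + deriv g x₀ * (x - x₀) + deriv (deriv g) x₀ / 2 * (x - x₀) ^ 2 := by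
  simp only [taylor_within_apply, Finset.sum_range_succ, Finset.sum_range_zero,
    iteratedDerivWithin_of_isOpen_eq_iterate hs hx₀, Function.iterate_succ_apply,
    Function.iterate_zero_apply, smul_eq_mul]
  norm_num [Nat.factorial]
  ring

theorem isLittleO_sub_taylor_two {g : ℝ → ℝ} {U : Set ℝ} (hU : IsOpen U)
    (hg : ContDiffOn ℝ 2 g U) {x₀ : ℝ} (hx₀ : x₀ ∈ U) :
    (fun x ↦ g x - (g x₀ + deriv g x₀ * (x - x₀) + deriv (deriv g) x₀ / 2 * (x - x₀) ^ 2))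
      =o[𝓝 x₀] fun x ↦ (x - x₀) ^ 2 := by
  obtain ⟨ε, hε, hball⟩ := Metric.isOpen_iff.1 hU x₀ hx₀
  have hx₀ball := Metric.mem_ball_self hε (x := x₀)
  have h := taylor_isLittleO (convex_ball x₀ ε) hx₀ball (hg.mono hball)
  rw [Metric.isOpen_ball.nhdsWithin_eq hx₀ball] at h
  simpa only [taylorWithinEval_two_of_isOpen Metric.isOpen_ball hx₀ball] using h

theorem eventually_mul_sq_le_abs_sub {g : ℝ → ℝ} {U : Set ℝ} (hU : IsOpen U)
    (hg : ContDiffOn ℝ 2 g U) {θ : ℝ} (hθ : θ ∈ U) (hcrit : deriv g θ = 0) :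
    ∀ᶠ y in 𝓝 θ, |deriv (deriv g) θ| / 4 * (y - θ) ^ 2 ≤ |g y - g θ| := by
  set c := deriv (deriv g) θ
  by_cases hc : c = 0
  · simp [hc]
  filter_upwards [(isLittleO_sub_taylor_two hU hg hθ).def (c := |c| / 4) (by positivity)]
    with y hy
  simp only [hcrit, zero_mul, add_zero, Real.norm_eq_abs, abs_pow, sq_abs] at hy
  have hquad : |c / 2 * (y - θ) ^ 2| = |c| / 2 * (y - θ) ^ 2 := by
    rw [abs_mul, abs_div, abs_two, abs_of_nonneg (sq_nonneg (y - θ))]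
  have := abs_sub_abs_le_abs_sub (c / 2 * (y - θ) ^ 2) (g y - g θ)
  rw [show c / 2 * (y - θ) ^ 2 - (g y - g θ) = -(g y - (g θ + c / 2 * (y - θ) ^ 2)) by ring,
    abs_neg] at this
  linarith

theorem tendsto_of_tendsto_apply_of_strictMax {X ι : Type*} [TopologicalSpace X] {l : Filter ι}
    {K : Set X} (hK : IsCompact K) {g : X → ℝ} (hg : ContinuousOn g K) {θ : X}
    (hmax : ∀ y ∈ K, y ≠ θ → g y < g θ) {x : ι → X} (hx : ∀ i, x i ∈ K)
    (hgx : Tendsto (fun i ↦ g (x i)) l (𝓝 (g θ))) : Tendsto x l (𝓝 θ) := by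
  refine tendsto_nhds.2 fun V hV hθV ↦ ?_
  rcases (K \ V).eq_empty_or_nonempty with hempty | hne
  · exact univ_mem' fun i ↦ by_contra fun hi ↦ hempty.subset ⟨hx i, hi⟩
  obtain ⟨y, hy, hy_max⟩ := (hK.diff hV).exists_isMaxOn hne (hg.mono sdiff_subset)
  have hlt : g y < g θ := hmax y hy.1 (ne_of_mem_of_not_mem hθV hy.2).symm
  filter_upwards [hgx.eventually (lt_mem_nhds hlt)] with i hi
  by_contra hiV
  exact (not_lt_of_ge (hy_max ⟨hx i, hiV⟩)) hi

theorem sub_le_two_mul_of_abs_sub_le {X : Type*} {f g : X → ℝ} {x y : X} {α : ℝ}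
    (hx : |f x - g x| ≤ α) (hy : |f y - g y| ≤ α) (hxy : f y ≤ f x) : g y - g x ≤ 2 * α := by
  linarith [abs_le.1 hx, abs_le.1 hy]

theorem argmax_rate_general (a b : ℝ) (U : Set ℝ) (hU : IsOpen U)
    (hSU : Set.Icc a b ⊆ U)
    (g : ℝ → ℝ) (hg : ContDiffOn ℝ 2 g U)
    (θ : ℝ) (hθ : θ ∈ interior (Set.Icc a b))
    (hmax : ∀ y ∈ Set.Icc a b, y ≠ θ → g y < g θ)
    (hcrit : deriv g θ = 0)
    (hg''θ : deriv (deriv g) θ ≠ 0)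
    (gn : ℕ → ℝ → ℝ) (α : ℕ → ℝ)
    (hα : ∀ n, IsLUB ((fun y => |gn n y - g y|) '' Set.Icc a b) (α n))
    (hα0 : Filter.Tendsto α Filter.atTop (nhds 0))
    (θn : ℕ → ℝ) (hθn : ∀ n, θn n ∈ Set.Icc a b)
    (hmaxn : ∀ n, ∀ y ∈ Set.Icc a b, gn n y ≤ gn n (θn n)) :
    ∃ C > 0, ∃ N : ℕ, ∀ n ≥ N, (θn n - θ) ^ 2 ≤ C * α n := by
  have hθS : θ ∈ Icc a b := interior_subset hθ
  have hdev : ∀ n, ∀ y ∈ Icc a b, |gn n y - g y| ≤ α n := fun n y hy ↦ (hα n).1 ⟨y, hy, rfl⟩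
  have hgap : ∀ n, g θ - g (θn n) ≤ 2 * α n := fun n ↦
    sub_le_two_mul_of_abs_sub_le (hdev n _ (hθn n)) (hdev n θ hθS) (hmaxn n θ hθS)
  have hle : ∀ n, g (θn n) ≤ g θ := fun n ↦
    (eq_or_ne (θn n) θ).elim (fun h ↦ h ▸ le_rfl) fun h ↦ (hmax _ (hθn n) h).le
  have hvalue : Tendsto (fun n ↦ g (θn n)) atTop (𝓝 (g θ)) := by
    have hlower : Tendsto (fun n ↦ g θ - 2 * α n) atTop (𝓝 (g θ)) := by
      simpa using (tendsto_const_nhds (x := g θ)).sub (hα0.const_mul 2)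
    exact tendsto_of_tendsto_of_tendsto_of_le_of_le hlower tendsto_const_nhds
      (fun n ↦ by linarith [hgap n]) hle
  have hconsistent : Tendsto θn atTop (𝓝 θ) :=
    tendsto_of_tendsto_apply_of_strictMax isCompact_Icc (hg.continuousOn.mono hSU) hmax hθn hvalue
  obtain ⟨N, hN⟩ := eventually_atTop.1
    (hconsistent.eventually (eventually_mul_sq_le_abs_sub hU hg (hSU hθS) hcrit))
  set c := |deriv (deriv g) θ|
  have hc : 0 < c := abs_pos.2 hg''θ
  refine ⟨8 / c, by positivity, N, fun n hn ↦ ?_⟩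
  have hq := hN n hn
  rw [abs_sub_comm, abs_of_nonneg (sub_nonneg.2 (hle n))] at hq
  calc (θn n - θ) ^ 2 = 4 / c * (c / 4 * (θn n - θ) ^ 2) := by field_simp
    _ ≤ 4 / c * (2 * α n) := by gcongr 4 / c * ?_; exact hq.trans (hgap n)
    _ = 8 / c * α n := by ring

/-- Rate of convergence of the argmax estimator: `(θ̂ₙ - θ)² = O(αₙ)` where
`αₙ` is the uniform deviation of `gₙ` from `g` over `S`. -/
theorem argmax_rate (a b : ℝ) (hab : a < b) (U : Set ℝ) (hU : IsOpen U)
    (hSU : Set.Icc a b ⊆ U)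
    (g : ℝ → ℝ) (hg : ContDiffOn ℝ 2 g U)
    (θ : ℝ) (hθ : θ ∈ interior (Set.Icc a b))
    (hmax : ∀ y ∈ Set.Icc a b, y ≠ θ → g y < g θ)
    (hcrit : deriv g θ = 0)
    (hg''cont : ContinuousOn (deriv (deriv g)) U)
    (hg''θ : deriv (deriv g) θ ≠ 0)
    (gn : ℕ → ℝ → ℝ) (α : ℕ → ℝ)
    (hα : ∀ n, IsLUB ((fun y => |gn n y - g y|) '' Set.Icc a b) (α n))
    (hα0 : Filter.Tendsto α Filter.atTop (nhds 0))
    (θn : ℕ → ℝ) (hθn : ∀ n, θn n ∈ Set.Icc a b)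
    (hmaxn : ∀ n, ∀ y ∈ Set.Icc a b, gn n y ≤ gn n (θn n)) :
    ∃ C > 0, ∃ N : ℕ, ∀ n ≥ N, (θn n - θ) ^ 2 ≤ C * α n :=
  argmax_rate_general a b U hU hSU g hg θ hθ hmax hcrit hg''θ gn α hα hα0 θn hθn hmaxn
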